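/- arXiv:1802.07676 — 3 statements merged into one kernel-verified Lean document; each statement's English description precedes it below -/
import Mathlib

section
/- Let D > 0 and c ∈ ℝ. There exists a constant β > 0 such that for every λ ∈ ℂ with Re λ ≥ −1/2 and |Im λ| ≤ 1/2 and every k ∈ ℤ, the spatial eigenvalues μ₊(λ,k) := (−c + √(c² + 4D(1+λ+ik)))/(2D) and μ₋(λ,k) := (−c − √(c² + 4D(1+λ+ik)))/(2D), defined with the principal branch of the complex square root (which is well defined since Re(c² + 4D(1+λ+ik)) ≥ c² + 2D > 0), satisfy Re μ₊(λ,k) ≥ β√(1+|k|) and Re μ₋(λ,k) ≤ −β√(1+|k|). -/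
/-!
Write `w = c² + 4D(1 + λ + ik)`, so that `μ± = (−c ± √w)/(2D)`. The real part of the principal
square root satisfies `(Re √w)² = (‖w‖ + Re w)/2`. Since `Re w ≥ c² + 2D` and
`|Im w| ≥ 4D(|k| − 1/2)`, this gives both `Re √w ≥ S := √(c² + 2D)` and
`Re √w ≥ √D · √(1 + |k|)`. As `|c| < S ≤ Re √w`, the shift by `−c` costs at most the fixed
fraction `|c|/S` of `Re √w`, whence `±Re μ± ≥ (1 − |c|/S) √D √(1 + |k|) / (2D)`.
-/

open Complex

theorem Complex.sqrt_le_re_cpow_inv_two {w : ℂ} {m : ℝ} (h : 2 * m ≤ ‖w‖ + w.re) :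
    √m ≤ (w ^ (2⁻¹ : ℂ)).re := by
  rw [cpow_inv_two_re]
  exact Real.sqrt_le_sqrt (by linarith)

section Discriminant

variable {D : ℝ} (c : ℝ) {z : ℂ}

theorem re_discr : ((c : ℂ) ^ 2 + 4 * (D : ℂ) * z).re = c ^ 2 + 4 * D * z.re := by
  simp [pow_two]

theorem im_discr : ((c : ℂ) ^ 2 + 4 * (D : ℂ) * z).im = 4 * D * z.im := by
  simp [pow_two]

theorem sqrt_le_re_sqrt_discr (hD : 0 ≤ D) (hz : 1 / 2 ≤ z.re) :
    √(c ^ 2 + 2 * D) ≤ (((c : ℂ) ^ 2 + 4 * (D : ℂ) * z) ^ (2⁻¹ : ℂ)).re := by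
  apply sqrt_le_re_cpow_inv_two
  have hre := re_le_norm ((c : ℂ) ^ 2 + 4 * (D : ℂ) * z)
  rw [re_discr] at hre ⊢
  nlinarith

theorem sqrt_mul_le_re_sqrt_discr (hD : 0 ≤ D) (hz : 1 / 2 ≤ z.re) {t : ℝ}
    (ht : t - 1 / 2 ≤ |z.im|) :
    √(D * (1 + t)) ≤ (((c : ℂ) ^ 2 + 4 * (D : ℂ) * z) ^ (2⁻¹ : ℂ)).re := by
  apply sqrt_le_re_cpow_inv_two
  have hre := re_le_norm ((c : ℂ) ^ 2 + 4 * (D : ℂ) * z)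
  have him := abs_im_le_norm ((c : ℂ) ^ 2 + 4 * (D : ℂ) * z)
  rw [re_discr] at hre ⊢
  rw [im_discr, abs_mul, abs_of_nonneg (by positivity : 0 ≤ 4 * D)] at him
  nlinarith

end Discriminant

theorem one_sub_div_mul_le_sub {a S r b : ℝ} (ha : 0 ≤ a) (hS : 0 < S) (haS : a ≤ S)
    (hSr : S ≤ r) (hbr : b ≤ r) : (1 - a / S) * b ≤ r - a := by
  have hε : 0 ≤ 1 - a / S := sub_nonneg.2 (div_le_one_of_le₀ haS hS.le)
  have hslack : 0 ≤ a * (r - S) / S := div_nonneg (mul_nonneg ha (sub_nonneg.2 hSr)) hS.le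
  calc (1 - a / S) * b ≤ (1 - a / S) * r := mul_le_mul_of_nonneg_left hbr hε
    _ = r - a - a * (r - S) / S := by field_simp; ring
    _ ≤ r - a := by linarith

theorem re_div_two_mul_ofReal (z : ℂ) (D : ℝ) : (z / (2 * (D : ℂ))).re = z.re / (2 * D) := by
  rw [← ofReal_ofNat, ← ofReal_mul, div_ofReal_re]

/-- Uniform lower bound on the real parts of the spatial eigenvalues
`μ±(λ,k) = (−c ± √(c² + 4D(1+λ+ik)))/(2D)` for `Re λ ≥ −1/2`, `|Im λ| ≤ 1/2`. -/
theorem stmt0 (D c : ℝ) (hD : 0 < D) :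
    ∃ β : ℝ, 0 < β ∧ ∀ lam : ℂ, (-1/2 : ℝ) ≤ lam.re → |lam.im| ≤ 1/2 →
      ∀ k : ℤ,
        β * Real.sqrt (1 + |(k : ℝ)|) ≤
          (((-(c:ℂ) + ((c:ℂ)^2 + 4*(D:ℂ)*(1 + lam + Complex.I * (k:ℂ))) ^ ((1:ℂ)/2)) /
            (2*(D:ℂ))).re) ∧
        (((-(c:ℂ) - ((c:ℂ)^2 + 4*(D:ℂ)*(1 + lam + Complex.I * (k:ℂ))) ^ ((1:ℂ)/2)) /
            (2*(D:ℂ))).re) ≤ -(β * Real.sqrt (1 + |(k : ℝ)|)) := by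
  set S := √(c ^ 2 + 2 * D)
  have hS : 0 < S := Real.sqrt_pos.2 (by positivity)
  have hcS : |c| < S := (Real.lt_sqrt (abs_nonneg c)).2 (by rw [sq_abs]; linarith)
  have hε : 0 < 1 - |c| / S := sub_pos.2 ((div_lt_one hS).2 hcS)
  refine ⟨(1 - |c| / S) * √D / (2 * D), by positivity, fun lam hre him k => ?_⟩
  rw [one_div (2 : ℂ), re_div_two_mul_ofReal, re_div_two_mul_ofReal, add_re, sub_re, neg_re,
    ofReal_re, div_mul_eq_mul_div, ← neg_div, div_le_div_iff_of_pos_right (by positivity),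
    div_le_div_iff_of_pos_right (by positivity)]
  set r := (((c : ℂ) ^ 2 + 4 * (D : ℂ) * (1 + lam + I * (k : ℂ))) ^ (2⁻¹ : ℂ)).re
  have hz : 1 / 2 ≤ (1 + lam + I * (k : ℂ)).re := by simp only [add_re, one_re, I_mul_re, intCast_im, neg_zero, add_zero]; linarith
  have hk : |(k : ℝ)| - 1 / 2 ≤ |(1 + lam + I * (k : ℂ)).im| := by
    simp only [add_im, one_im, I_mul_im, intCast_re, zero_add]
    have := abs_sub_abs_le_abs_sub (k : ℝ) (-lam.im)
    rw [sub_neg_eq_add, add_comm, abs_neg] at this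
    linarith
  have hSr : S ≤ r := sqrt_le_re_sqrt_discr c hD.le hz
  have hkr : √D * √(1 + |(k : ℝ)|) ≤ r := by
    rw [← Real.sqrt_mul hD.le]; exact sqrt_mul_le_re_sqrt_discr c hD.le hz hk
  have hmain := one_sub_div_mul_le_sub (abs_nonneg c) hS hcS.le hSr hkr
  rw [← mul_assoc] at hmain
  constructor <;> linarith [le_abs_self c, neg_abs_le c]
end

section
/- Let c_d ∈ ℝ and c₋ < 0 < c₊ be real constants, and define H₀(x,t) := (4πt)^{−1/2} exp(−(x + c_d t)²/(4t)) e^{−t}. Then there exist constants C > 0 and M₀ > 0 such that for all x ∈ ℝ and t > 0, H₀(x,t) ≤ C t^{−1/2} θ(x,t), where θ(x,t) := Σ_{±} (1+t)^{−1/2} exp(−(x − c_± t)²/(M₀(1+t))). -/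
open Real

/-- The free temporal Green's function `H₀` of `1 + ∂_t − ∂_x² − c_d ∂_x` is absorbed, up to a
factor `C t^{−1/2}`, into the radiating Gaussian profile `θ` moving with speeds `c₋ < 0 < c₊`. -/
theorem stmt6 (cd cm cp : ℝ) (hm : cm < 0) (hp : 0 < cp) :
    ∃ C M₀ : ℝ, 0 < C ∧ 0 < M₀ ∧ ∀ (x t : ℝ), 0 < t →
      (4 * π * t) ^ (-(1:ℝ)/2) * Real.exp (-(x + cd * t)^2 / (4 * t)) * Real.exp (-t) ≤
        C * t ^ (-(1:ℝ)/2) *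
          ((1 + t) ^ (-(1:ℝ)/2) * Real.exp (-(x - cp * t)^2 / (M₀ * (1 + t))) +
           (1 + t) ^ (-(1:ℝ)/2) * Real.exp (-(x - cm * t)^2 / (M₀ * (1 + t)))) := by
  refine ⟨1, 8 + 4 * (cd + cp)^2, one_pos, by positivity, fun x t ht => ?_⟩
  set M₀ : ℝ := 8 + 4 * (cd + cp)^2 with hM₀
  have hMpos : (0:ℝ) < M₀ := by positivity
  have ht1 : (0:ℝ) < 1 + t := by linarith
  have hden : (0:ℝ) < M₀ * (1 + t) := by positivity
  -- key exponent inequality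
  have hB : (x - cp*t)^2 ≤ 2*(x + cd*t)^2 + 2*((cd + cp)*t)^2 := by
    nlinarith [sq_nonneg ((x + cd*t) + (cd + cp)*t)]
  have key : (x - cp*t)^2 / (M₀ * (1 + t)) ≤ (x + cd*t)^2 / (4*t) + t/2 := by
    have h1 : (2*(x + cd*t)^2) / (M₀ * (1 + t)) ≤ (x + cd*t)^2 / (4*t) := by
      rw [div_le_div_iff₀ hden (by positivity)]
      nlinarith [sq_nonneg (x + cd*t), sq_nonneg (cd + cp),
        mul_nonneg (sq_nonneg (x + cd*t)) ht.le,
        mul_nonneg (mul_nonneg (sq_nonneg (cd + cp)) (sq_nonneg (x + cd*t))) ht.le,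
        mul_nonneg (sq_nonneg (cd + cp)) (sq_nonneg (x + cd*t))]
    have h2 : (2*((cd + cp)*t)^2) / (M₀ * (1 + t)) ≤ t/2 := by
      rw [div_le_div_iff₀ hden two_pos]
      nlinarith [mul_nonneg (sq_nonneg (cd + cp)) ht.le, sq_nonneg (cd+cp), ht,
        mul_nonneg (mul_nonneg (sq_nonneg (cd + cp)) ht.le) ht.le]
    calc (x - cp*t)^2 / (M₀ * (1 + t))
        ≤ (2*(x + cd*t)^2 + 2*((cd + cp)*t)^2) / (M₀ * (1 + t)) := by gcongr
      _ = (2*(x + cd*t)^2) / (M₀ * (1 + t)) + (2*((cd + cp)*t)^2) / (M₀ * (1 + t)) :=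
          add_div _ _ _
      _ ≤ (x + cd*t)^2 / (4*t) + t/2 := add_le_add h1 h2
  -- (1+t)^(-1/2) ≥ exp(-t/2)
  have hexp : Real.exp (-(t/2)) ≤ (1 + t) ^ (-(1:ℝ)/2) := by
    have h1 : (1 + t) ^ ((1:ℝ)/2) ≤ Real.exp (t/2) := by
      have : (1 + t) ^ ((1:ℝ)/2) ≤ (Real.exp t) ^ ((1:ℝ)/2) := by
        apply Real.rpow_le_rpow ht1.le _ (by norm_num)
        linarith [Real.add_one_le_exp t]
      calc (1 + t) ^ ((1:ℝ)/2) ≤ (Real.exp t) ^ ((1:ℝ)/2) := this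
        _ = Real.exp (t/2) := by
            rw [← Real.exp_mul]
            ring_nf
    have h2 : (1 + t) ^ (-(1:ℝ)/2) = ((1 + t) ^ ((1:ℝ)/2))⁻¹ := by
      rw [neg_div, Real.rpow_neg ht1.le]
    rw [h2, Real.exp_neg]
    exact inv_anti₀ (by positivity) h1
  -- main single-term bound
  have hpow : (4 * π * t) ^ (-(1:ℝ)/2) ≤ t ^ (-(1:ℝ)/2) := by
    apply Real.rpow_le_rpow_of_nonpos ht
    · nlinarith [Real.pi_gt_three, ht]
    · norm_num
  have htpow : (0:ℝ) ≤ t ^ (-(1:ℝ)/2) := Real.rpow_nonneg ht.le _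
  have hmain : (4 * π * t) ^ (-(1:ℝ)/2) * Real.exp (-(x + cd*t)^2 / (4*t)) * Real.exp (-t)
      ≤ t ^ (-(1:ℝ)/2) * ((1 + t) ^ (-(1:ℝ)/2) * Real.exp (-(x - cp*t)^2 / (M₀ * (1 + t)))) := by
    have hE : Real.exp (-(x + cd*t)^2 / (4*t)) * Real.exp (-t)
        ≤ Real.exp (-(t/2)) * Real.exp (-(x - cp*t)^2 / (M₀ * (1 + t))) := by
      rw [← Real.exp_add, ← Real.exp_add]
      apply Real.exp_le_exp.mpr
      have := key
      rw [neg_div, neg_div]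
      linarith
    calc (4 * π * t) ^ (-(1:ℝ)/2) * Real.exp (-(x + cd*t)^2 / (4*t)) * Real.exp (-t)
        = (4 * π * t) ^ (-(1:ℝ)/2) * (Real.exp (-(x + cd*t)^2 / (4*t)) * Real.exp (-t)) := by
          ring
      _ ≤ t ^ (-(1:ℝ)/2) * (Real.exp (-(t/2)) * Real.exp (-(x - cp*t)^2 / (M₀ * (1 + t)))) := by
          apply mul_le_mul hpow hE (by positivity) htpow
      _ ≤ t ^ (-(1:ℝ)/2) * ((1 + t) ^ (-(1:ℝ)/2) * Real.exp (-(x - cp*t)^2 / (M₀ * (1 + t)))) := by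
          apply mul_le_mul_of_nonneg_left _ htpow
          exact mul_le_mul_of_nonneg_right hexp (Real.exp_pos _).le
  have hpos2 : 0 ≤ t ^ (-(1:ℝ)/2) *
      ((1 + t) ^ (-(1:ℝ)/2) * Real.exp (-(x - cm*t)^2 / (M₀ * (1 + t)))) := by positivity
  calc (4 * π * t) ^ (-(1:ℝ)/2) * Real.exp (-(x + cd*t)^2 / (4*t)) * Real.exp (-t)
      ≤ t ^ (-(1:ℝ)/2) * ((1 + t) ^ (-(1:ℝ)/2) * Real.exp (-(x - cp*t)^2 / (M₀ * (1 + t)))) :=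
        hmain
    _ ≤ 1 * t ^ (-(1:ℝ)/2) *
          ((1 + t) ^ (-(1:ℝ)/2) * Real.exp (-(x - cp*t)^2 / (M₀ * (1 + t))) +
           (1 + t) ^ (-(1:ℝ)/2) * Real.exp (-(x - cm*t)^2 / (M₀ * (1 + t)))) := by
        rw [one_mul, mul_add (t ^ (-(1:ℝ)/2))]
        exact le_add_of_nonneg_right hpos2
end

section
/- For every M > 0 there exists a constant C > 0 such that for all t ≥ 0, (1+t)^{1/2} ∫₀ᵗ (t−s)⁻¹ (1+s)⁻¹ √( 4M(1+s)(t−s) / (4(t−s) + M(1+s)) ) ds ≤ C. -/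
open intervalIntegral Real

section helpers

lemma stmt10_intB_integrable {r : ℝ} (hr : -1 < r) (t a b : ℝ) :
    IntervalIntegrable (fun s => (t - s) ^ r) MeasureTheory.volume a b := by
  have := (intervalIntegrable_rpow' hr (a := t - a) (b := t - b)).comp_sub_left t
  simpa using this

lemma stmt10_intA_val (c : ℝ) :
    ∫ s in (0:ℝ)..c, (1 + s) ^ (-3/4 : ℝ) = 4 * ((1 + c) ^ (1/4 : ℝ) - 1) := by
  have h := intervalIntegral.integral_comp_add_left (a := (0:ℝ)) (b := c)
    (fun x => x ^ (-3/4 : ℝ)) 1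
  rw [h, integral_rpow (Or.inl (by norm_num))]
  norm_num
  ring

lemma stmt10_intB_val {r : ℝ} (hr : -1 < r) (t c : ℝ) :
    ∫ s in c..t, (t - s) ^ r = (t - c) ^ (r + 1) / (r + 1) := by
  have h := intervalIntegral.integral_comp_sub_left (a := c) (b := t)
    (fun x => x ^ r) t
  rw [h]
  simp only [sub_self]
  rw [integral_rpow (Or.inl hr), Real.zero_rpow (by linarith : r + 1 ≠ 0)]
  ring

end helpers

lemma stmt10_ptwise (M a b : ℝ) (hM : 0 < M) (ha : 0 ≤ a) (hb : 1 ≤ b) :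
    a⁻¹ * b⁻¹ * Real.sqrt (4 * M * b * a / (4 * a + M * b)) ≤
      M ^ (1/4 : ℝ) * a ^ (-3/4 : ℝ) * b ^ (-3/4 : ℝ) := by
  have hb0 : 0 < b := lt_of_lt_of_le one_pos hb
  rcases eq_or_lt_of_le ha with h | ha
  · rw [← h]
    simp [Real.zero_rpow (by norm_num : (-3/4 : ℝ) ≠ 0)]
  have hMab : 0 ≤ M * a * b := by positivity
  -- key: 4a + Mb ≥ 4 √(M a b)
  have key1 : 4 * Real.sqrt (M * a * b) ≤ 4 * a + M * b := by
    have h1 : Real.sqrt (M * a * b) = Real.sqrt a * Real.sqrt (M * b) := by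
      rw [show M * a * b = a * (M * b) by ring, Real.sqrt_mul ha.le]
    nlinarith [sq_nonneg (2 * Real.sqrt a - Real.sqrt (M * b)),
      Real.sq_sqrt ha.le, Real.sq_sqrt (by positivity : (0:ℝ) ≤ M * b),
      Real.sqrt_nonneg a, Real.sqrt_nonneg (M * b)]
  have hsp : 0 < Real.sqrt (M * a * b) := Real.sqrt_pos.2 (by positivity)
  have key2 : 4 * M * b * a / (4 * a + M * b) ≤ Real.sqrt (M * a * b) := by
    rw [div_le_iff₀ (by positivity)]
    nlinarith [Real.sq_sqrt hMab, hsp]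
  have key3 : Real.sqrt (4 * M * b * a / (4 * a + M * b)) ≤ (M * a * b) ^ (1/4 : ℝ) := by
    calc Real.sqrt (4 * M * b * a / (4 * a + M * b)) ≤ Real.sqrt (Real.sqrt (M * a * b)) :=
          Real.sqrt_le_sqrt key2
      _ = (M * a * b) ^ (1/4 : ℝ) := by
          rw [Real.sqrt_eq_rpow, Real.sqrt_eq_rpow, ← Real.rpow_mul hMab]
          norm_num
  have hrw : M ^ (1/4 : ℝ) * a ^ (-3/4 : ℝ) * b ^ (-3/4 : ℝ)
      = a⁻¹ * b⁻¹ * (M * a * b) ^ (1/4 : ℝ) := by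
    rw [Real.mul_rpow (by positivity) hb0.le, Real.mul_rpow hM.le ha.le]
    rw [show (-3/4 : ℝ) = 1/4 + (-1) by norm_num, Real.rpow_add ha, Real.rpow_add hb0,
      Real.rpow_neg_one, Real.rpow_neg_one]
    ring
  rw [hrw]
  have : 0 ≤ a⁻¹ * b⁻¹ := by positivity
  exact mul_le_mul_of_nonneg_left key3 this

lemma stmt10_ptwise_small (M a b : ℝ) (hM : 0 < M) (ha : 0 ≤ a) (hb : 1 ≤ b) :
    a⁻¹ * b⁻¹ * Real.sqrt (4 * M * b * a / (4 * a + M * b)) ≤ 2 * a ^ (-1/2 : ℝ) := by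
  have hb0 : 0 < b := lt_of_lt_of_le one_pos hb
  rcases eq_or_lt_of_le ha with h | ha
  · rw [← h]; simp [Real.zero_rpow (by norm_num : (-1/2 : ℝ) ≠ 0)]
  have key : 4 * M * b * a / (4 * a + M * b) ≤ 4 * a := by
    rw [div_le_iff₀ (by positivity)]
    nlinarith
  have h2 : Real.sqrt (4 * M * b * a / (4 * a + M * b)) ≤ 2 * Real.sqrt a := by
    calc Real.sqrt (4 * M * b * a / (4 * a + M * b)) ≤ Real.sqrt (4 * a) :=
          Real.sqrt_le_sqrt key
      _ = 2 * Real.sqrt a := by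
          rw [show (4:ℝ) * a = 2^2 * a by norm_num, Real.sqrt_mul (by positivity),
            Real.sqrt_sq (by norm_num)]
  have hb1 : b⁻¹ ≤ 1 := by
    rw [inv_le_one_iff₀]; right; exact hb
  have hrw : 2 * a ^ (-1/2 : ℝ) = a⁻¹ * (2 * Real.sqrt a) := by
    rw [Real.sqrt_eq_rpow, show (-1/2 : ℝ) = -1 + 1/2 by norm_num, Real.rpow_add ha,
      Real.rpow_neg_one]
    ring
  calc a⁻¹ * b⁻¹ * Real.sqrt (4 * M * b * a / (4 * a + M * b))
      ≤ a⁻¹ * 1 * (2 * Real.sqrt a) := by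
        apply mul_le_mul (by apply mul_le_mul_of_nonneg_left hb1 (by positivity))
          h2 (Real.sqrt_nonneg _) (by positivity)
    _ = 2 * a ^ (-1/2 : ℝ) := by rw [hrw]; ring

lemma stmt10_numeric (M4 u : ℝ) (hM4 : 0 < M4) (hu : 1/2 ≤ u) :
    Real.sqrt (1 + 2*u) * (M4 * (u ^ (-3/4:ℝ)) * (4 * ((1+u) ^ (1/4:ℝ) - 1))
      + M4 * ((1+u) ^ (-3/4:ℝ)) * (4 * u ^ (1/4:ℝ))) ≤ 30 * M4 + 10 := by
  have hu0 : 0 < u := by linarith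
  have hv0 : 0 < 1 + u := by positivity
  have huv : u ≤ 1 + u := by linarith
  have hv3 : 1 + u ≤ 3 * u := by linarith
  have h1 : Real.sqrt (1 + 2*u) ≤ Real.sqrt 2 * (1+u) ^ (1/2:ℝ) := by
    rw [← Real.sqrt_eq_rpow, ← Real.sqrt_mul (by norm_num)]
    exact Real.sqrt_le_sqrt (by linarith)
  have hsqrt2 : Real.sqrt 2 ≤ 1.5 := by
    nlinarith [Real.sq_sqrt (by norm_num : (0:ℝ) ≤ 2), Real.sqrt_nonneg 2]
  have e3 : u ^ (-3/4:ℝ) * (1+u) ^ (3/4:ℝ) ≤ 3 := by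
    have h34 : (1+u) ^ (3/4:ℝ) ≤ 3 * u ^ (3/4:ℝ) := by
      calc (1+u) ^ (3/4:ℝ) ≤ (3*u) ^ (3/4:ℝ) :=
            Real.rpow_le_rpow hv0.le hv3 (by norm_num)
        _ = 3 ^ (3/4:ℝ) * u ^ (3/4:ℝ) := Real.mul_rpow (by norm_num) hu0.le
        _ ≤ 3 * u ^ (3/4:ℝ) := by
            apply mul_le_mul_of_nonneg_right _ (Real.rpow_nonneg hu0.le _)
            calc (3:ℝ) ^ (3/4:ℝ) ≤ 3 ^ (1:ℝ) :=
                  Real.rpow_le_rpow_of_exponent_le (by norm_num) (by norm_num)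
              _ = 3 := Real.rpow_one 3
    calc u ^ (-3/4:ℝ) * (1+u) ^ (3/4:ℝ) ≤ u ^ (-3/4:ℝ) * (3 * u ^ (3/4:ℝ)) :=
          mul_le_mul_of_nonneg_left h34 (Real.rpow_nonneg hu0.le _)
      _ = 3 * (u ^ (-3/4:ℝ) * u ^ (3/4:ℝ)) := by ring
      _ = 3 := by
          rw [← Real.rpow_add hu0, show (-3/4:ℝ) + 3/4 = 0 by norm_num, Real.rpow_zero]
          norm_num
  have P1 : (1+u) ^ (1/2:ℝ) * (u ^ (-3/4:ℝ) * (1+u) ^ (1/4:ℝ)) ≤ 3 := by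
    have hq : (1+u) ^ (1/2:ℝ) * (u ^ (-3/4:ℝ) * (1+u) ^ (1/4:ℝ))
        = u ^ (-3/4:ℝ) * ((1+u) ^ (1/2:ℝ) * (1+u) ^ (1/4:ℝ)) := by ring
    rw [hq, ← Real.rpow_add hv0, show (1/2:ℝ) + 1/4 = 3/4 by norm_num]
    exact e3
  have P2 : (1+u) ^ (1/2:ℝ) * ((1+u) ^ (-3/4:ℝ) * u ^ (1/4:ℝ)) ≤ 1 := by
    have h14 : u ^ (1/4:ℝ) ≤ (1+u) ^ (1/4:ℝ) := Real.rpow_le_rpow hu0.le huv (by norm_num)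
    have hq : (1+u) ^ (1/2:ℝ) * ((1+u) ^ (-3/4:ℝ) * u ^ (1/4:ℝ))
        = ((1+u) ^ (1/2:ℝ) * (1+u) ^ (-3/4:ℝ)) * u ^ (1/4:ℝ) := by ring
    rw [hq, ← Real.rpow_add hv0, show (1/2:ℝ) + -3/4 = -(1/4) by norm_num]
    calc (1+u) ^ (-(1/4):ℝ) * u ^ (1/4:ℝ) ≤ (1+u) ^ (-(1/4):ℝ) * (1+u) ^ (1/4:ℝ) :=
          mul_le_mul_of_nonneg_left h14 (Real.rpow_nonneg hv0.le _)
      _ = 1 := by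
          rw [← Real.rpow_add hv0, show (-(1/4):ℝ) + 1/4 = 0 by norm_num, Real.rpow_zero]
  have hone : (1:ℝ) ≤ (1+u) ^ (1/4:ℝ) := by
    have := Real.rpow_le_rpow (by norm_num : (0:ℝ) ≤ 1) (by linarith : (1:ℝ) ≤ 1 + u)
      (by norm_num : (0:ℝ) ≤ 1/4)
    rwa [Real.one_rpow] at this
  have hsum : M4 * (u ^ (-3/4:ℝ)) * (4 * ((1+u) ^ (1/4:ℝ) - 1))
      + M4 * ((1+u) ^ (-3/4:ℝ)) * (4 * u ^ (1/4:ℝ))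
      ≤ M4 * (4 * (u ^ (-3/4:ℝ) * (1+u) ^ (1/4:ℝ)))
      + M4 * (4 * ((1+u) ^ (-3/4:ℝ) * u ^ (1/4:ℝ))) := by
    have e2 : (1+u) ^ (1/4:ℝ) - 1 ≤ (1+u) ^ (1/4:ℝ) := by linarith
    have := mul_le_mul_of_nonneg_left e2 (by positivity : (0:ℝ) ≤ 4 * M4 * u ^ (-3/4:ℝ))
    nlinarith [this]
  have hpos : (0:ℝ) ≤ M4 * (u ^ (-3/4:ℝ)) * (4 * ((1+u) ^ (1/4:ℝ) - 1))
      + M4 * ((1+u) ^ (-3/4:ℝ)) * (4 * u ^ (1/4:ℝ)) := by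
    have h0 : (0:ℝ) ≤ (1+u) ^ (1/4:ℝ) - 1 := by linarith
    positivity
  calc Real.sqrt (1 + 2*u) * (M4 * (u ^ (-3/4:ℝ)) * (4 * ((1+u) ^ (1/4:ℝ) - 1))
      + M4 * ((1+u) ^ (-3/4:ℝ)) * (4 * u ^ (1/4:ℝ)))
      ≤ (Real.sqrt 2 * (1+u) ^ (1/2:ℝ)) *
        (M4 * (4 * (u ^ (-3/4:ℝ) * (1+u) ^ (1/4:ℝ)))
          + M4 * (4 * ((1+u) ^ (-3/4:ℝ) * u ^ (1/4:ℝ)))) :=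
        mul_le_mul h1 hsum hpos (by positivity)
    _ = 4 * (Real.sqrt 2 * M4) * ((1+u) ^ (1/2:ℝ) * (u ^ (-3/4:ℝ) * (1+u) ^ (1/4:ℝ)))
        + 4 * (Real.sqrt 2 * M4) * ((1+u) ^ (1/2:ℝ) * ((1+u) ^ (-3/4:ℝ) * u ^ (1/4:ℝ))) := by
        ring
    _ ≤ 4 * (Real.sqrt 2 * M4) * 3 + 4 * (Real.sqrt 2 * M4) * 1 := by
        have hc : (0:ℝ) ≤ 4 * (Real.sqrt 2 * M4) := by positivity
        have := mul_le_mul_of_nonneg_left P1 hc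
        have := mul_le_mul_of_nonneg_left P2 hc
        linarith
    _ ≤ 30 * M4 + 10 := by nlinarith [Real.sqrt_nonneg 2]
/-- Uniform bound on the time integral arising from convolving a heat kernel of variance
`4(t−s)` against the square of a Gaussian profile of variance `M(1+s)`. -/
theorem stmt10 (M : ℝ) (hM : 0 < M) :
    ∃ C : ℝ, 0 < C ∧ ∀ t : ℝ, 0 ≤ t →
      Real.sqrt (1 + t) *
        (∫ s in (0:ℝ)..t, (t - s)⁻¹ * (1 + s)⁻¹ *
          Real.sqrt (4 * M * (1 + s) * (t - s) / (4 * (t - s) + M * (1 + s)))) ≤ C := by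
  have hM4 : 0 < M ^ (1/4 : ℝ) := Real.rpow_pos_of_pos hM _
  refine ⟨30 * M ^ (1/4 : ℝ) + 10, by positivity, ?_⟩
  intro t ht
  set M4 : ℝ := M ^ (1/4 : ℝ) with hM4def
  set f : ℝ → ℝ := fun s => (t - s)⁻¹ * (1 + s)⁻¹ *
    Real.sqrt (4 * M * (1 + s) * (t - s) / (4 * (t - s) + M * (1 + s))) with hfdef
  by_cases hf : IntervalIntegrable f MeasureTheory.volume 0 t
  swap
  · rw [intervalIntegral.integral_undef hf, mul_zero]
    positivity
  by_cases ht1 : t ≤ 1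
  -- small time case
  · have hpt : ∀ s ∈ Set.Icc (0:ℝ) t, f s ≤ 2 * (t - s) ^ (-1/2 : ℝ) := by
      intro s hs
      exact stmt10_ptwise_small M (t - s) (1 + s) hM (by linarith [hs.2]) (by linarith [hs.1])
    have hIb : IntervalIntegrable (fun s => 2 * (t - s) ^ (-1/2 : ℝ))
        MeasureTheory.volume 0 t :=
      (stmt10_intB_integrable (by norm_num) t 0 t).const_mul 2
    have hmono : (∫ s in (0:ℝ)..t, f s) ≤ ∫ s in (0:ℝ)..t, 2 * (t - s) ^ (-1/2 : ℝ) :=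
      intervalIntegral.integral_mono_on ht hf hIb hpt
    have hval : (∫ s in (0:ℝ)..t, 2 * (t - s) ^ (-1/2 : ℝ)) = 4 * t ^ (1/2 : ℝ) := by
      rw [intervalIntegral.integral_const_mul,
        stmt10_intB_val (by norm_num : (-1:ℝ) < -1/2) t 0]
      norm_num
      ring
    have ht12 : t ^ (1/2 : ℝ) ≤ 1 := Real.rpow_le_one ht ht1 (by norm_num)
    have hintle : (∫ s in (0:ℝ)..t, f s) ≤ 4 := by
      rw [hval] at hmono; linarith
    have hintnn : 0 ≤ ∫ s in (0:ℝ)..t, f s := by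
      apply intervalIntegral.integral_nonneg ht
      intro s hs
      have h1 : 0 ≤ t - s := by linarith [hs.2]
      have h2 : (0:ℝ) < 1 + s := by linarith [hs.1]
      positivity
    have hsq : Real.sqrt (1 + t) ≤ 2 := by
      calc Real.sqrt (1 + t) ≤ Real.sqrt 4 := Real.sqrt_le_sqrt (by linarith)
        _ = 2 := by rw [show (4:ℝ) = 2^2 by norm_num, Real.sqrt_sq (by norm_num)]
    calc Real.sqrt (1 + t) * ∫ s in (0:ℝ)..t, f s ≤ 2 * 4 :=
          mul_le_mul hsq hintle hintnn (by norm_num)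
      _ ≤ 30 * M4 + 10 := by nlinarith
  -- large time case
  · push_neg at ht1
    have ht0 : 0 < t := by linarith
    have ht2 : 0 < t / 2 := by linarith
    set g : ℝ → ℝ := fun s => M4 * (t - s) ^ (-3/4 : ℝ) * (1 + s) ^ (-3/4 : ℝ) with hgdef
    have hcont : ∀ a b : ℝ, 0 ≤ a → a ≤ b →
        ContinuousOn (fun s => (1 + s) ^ (-3/4 : ℝ)) (Set.uIcc a b) := by
      intro a b ha hab
      apply ContinuousOn.rpow_const (by fun_prop)
      intro x hx
      rw [Set.uIcc_of_le hab] at hx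
      left
      nlinarith [hx.1]
    have hg : IntervalIntegrable g MeasureTheory.volume 0 t := by
      have h1 := ((stmt10_intB_integrable (by norm_num : (-1:ℝ) < -3/4) t 0 t).const_mul
        M4).mul_continuousOn (hcont 0 t le_rfl ht)
      exact h1
    have hpt : ∀ s ∈ Set.Icc (0:ℝ) t, f s ≤ g s := fun s hs =>
      stmt10_ptwise M (t - s) (1 + s) hM (by linarith [hs.2]) (by linarith [hs.1])
    have hmono : (∫ s in (0:ℝ)..t, f s) ≤ ∫ s in (0:ℝ)..t, g s :=
      intervalIntegral.integral_mono_on ht hf hg hpt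
    have hg1 : IntervalIntegrable g MeasureTheory.volume 0 (t/2) := by
      apply hg.mono_set
      rw [Set.uIcc_of_le (by linarith), Set.uIcc_of_le ht]
      exact Set.Icc_subset_Icc (le_refl 0) (by linarith)
    have hg2 : IntervalIntegrable g MeasureTheory.volume (t/2) t := by
      apply hg.mono_set
      rw [Set.uIcc_of_le (by linarith), Set.uIcc_of_le ht]
      exact Set.Icc_subset_Icc (by linarith) (le_refl t)
    have hsplit : (∫ s in (0:ℝ)..t, g s) =
        (∫ s in (0:ℝ)..(t/2), g s) + ∫ s in (t/2)..t, g s :=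
      (intervalIntegral.integral_add_adjacent_intervals hg1 hg2).symm
    set B1 : ℝ := M4 * ((t/2) ^ (-3/4:ℝ)) * (4 * ((1 + t/2) ^ (1/4:ℝ) - 1)) with hB1
    set B2 : ℝ := M4 * ((1 + t/2) ^ (-3/4:ℝ)) * (4 * (t/2) ^ (1/4:ℝ)) with hB2
    have hI1 : (∫ s in (0:ℝ)..(t/2), g s) ≤ B1 := by
      have hb : ∀ s ∈ Set.Icc (0:ℝ) (t/2),
          g s ≤ (M4 * (t/2) ^ (-3/4:ℝ)) * (1 + s) ^ (-3/4:ℝ) := by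
        intro s hs
        have hts : t/2 ≤ t - s := by linarith [hs.2]
        have hr := Real.rpow_le_rpow_of_nonpos ht2 hts (by norm_num : (-3/4:ℝ) ≤ 0)
        have h5 : M4 * (t - s) ^ (-3/4:ℝ) ≤ M4 * (t/2) ^ (-3/4:ℝ) :=
          mul_le_mul_of_nonneg_left hr hM4.le
        have h6 : (0:ℝ) ≤ (1 + s) ^ (-3/4:ℝ) := Real.rpow_nonneg (by linarith [hs.1]) _
        exact mul_le_mul_of_nonneg_right h5 h6
      have hIb1 : IntervalIntegrable (fun s => (M4 * (t/2) ^ (-3/4:ℝ)) * (1 + s) ^ (-3/4:ℝ))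
          MeasureTheory.volume 0 (t/2) :=
        (continuousOn_const.mul (hcont 0 (t/2) le_rfl (by linarith))).intervalIntegrable
      have h7 := intervalIntegral.integral_mono_on (by linarith : (0:ℝ) ≤ t/2) hg1 hIb1 hb
      rw [intervalIntegral.integral_const_mul, stmt10_intA_val (t/2)] at h7
      calc (∫ s in (0:ℝ)..(t/2), g s)
          ≤ M4 * (t/2) ^ (-3/4:ℝ) * (4 * ((1 + t/2) ^ (1/4:ℝ) - 1)) := h7
        _ = B1 := by rw [hB1]
    have hI2 : (∫ s in (t/2)..t, g s) ≤ B2 := by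
      have hv2 : (0:ℝ) < 1 + t/2 := by linarith
      have hb : ∀ s ∈ Set.Icc (t/2) t,
          g s ≤ (M4 * (1 + t/2) ^ (-3/4:ℝ)) * (t - s) ^ (-3/4:ℝ) := by
        intro s hs
        have hss : 1 + t/2 ≤ 1 + s := by linarith [hs.1]
        have hr := Real.rpow_le_rpow_of_nonpos hv2 hss (by norm_num : (-3/4:ℝ) ≤ 0)
        have h6 : (0:ℝ) ≤ M4 * (t - s) ^ (-3/4:ℝ) := by
          have : (0:ℝ) ≤ t - s := by linarith [hs.2]
          positivity
        calc g s = (M4 * (t - s) ^ (-3/4:ℝ)) * (1 + s) ^ (-3/4:ℝ) := by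
              rfl
          _ ≤ (M4 * (t - s) ^ (-3/4:ℝ)) * (1 + t/2) ^ (-3/4:ℝ) :=
              mul_le_mul_of_nonneg_left hr h6
          _ = (M4 * (1 + t/2) ^ (-3/4:ℝ)) * (t - s) ^ (-3/4:ℝ) := by ring
      have hIb2 : IntervalIntegrable
          (fun s => (M4 * (1 + t/2) ^ (-3/4:ℝ)) * (t - s) ^ (-3/4:ℝ))
          MeasureTheory.volume (t/2) t :=
        (stmt10_intB_integrable (by norm_num : (-1:ℝ) < -3/4) t (t/2) t).const_mul _
      have h7 := intervalIntegral.integral_mono_on (by linarith : t/2 ≤ t) hg2 hIb2 hb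
      have h8 := stmt10_intB_val (by norm_num : (-1:ℝ) < -3/4) t (t/2)
      rw [intervalIntegral.integral_const_mul, h8, show t - t/2 = t/2 by ring,
        show (-3/4:ℝ) + 1 = 1/4 by norm_num] at h7
      calc (∫ s in (t/2)..t, g s)
          ≤ M4 * (1 + t/2) ^ (-3/4:ℝ) * ((t/2) ^ (1/4:ℝ) / (1/4)) := h7
        _ = B2 := by rw [hB2]; ring
    have hnum := stmt10_numeric M4 (t/2) hM4 (by linarith)
    rw [show (1:ℝ) + 2 * (t/2) = 1 + t by ring] at hnum
    calc Real.sqrt (1 + t) * ∫ s in (0:ℝ)..t, f s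
        ≤ Real.sqrt (1 + t) * ∫ s in (0:ℝ)..t, g s :=
          mul_le_mul_of_nonneg_left hmono (Real.sqrt_nonneg _)
      _ = Real.sqrt (1 + t) * ((∫ s in (0:ℝ)..(t/2), g s) + ∫ s in (t/2)..t, g s) := by
          rw [hsplit]
      _ ≤ Real.sqrt (1 + t) * (B1 + B2) :=
          mul_le_mul_of_nonneg_left (add_le_add hI1 hI2) (Real.sqrt_nonneg _)
      _ ≤ 30 * M4 + 10 := hnum
end
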